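/- Let 0 < p ≤ 1/10 and let G be an (n,d,λ)-graph with λ ≤ pd. Let t ≥ 2 be an integer with t ≤ (1−5p)d, and let X ⊆ V(G) satisfy |X| ≥ (1−4p)n + t². Then the induced subgraph G[X] contains t pairwise vertex-disjoint stars, each having exactly t−1 leaves (i.e. t vertex-disjoint copies of K_{1,t−1}). -/

import Mathlib

open SimpleGraph

/-- `G` is an `(n,d,λ)`-graph: `n` vertices, `d`-regular, and all adjacency-matrix
eigenvalues except the largest one `d` are at most `λ` in absolute value. -/
def IsNDLGraph (n d : ℕ) (lam : ℝ) {V : Type*} [Fintype V] [DecidableEq V]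
    (G : SimpleGraph V) [DecidableRel G.Adj] : Prop :=
  Fintype.card V = n ∧ G.IsRegularOfDegree d ∧
    ∀ hA : (G.adjMatrix ℝ).IsHermitian,
      ∃ i₀ : V, hA.eigenvalues i₀ = (d : ℝ) ∧
        ∀ i : V, i ≠ i₀ → |hA.eigenvalues i| ≤ lam

section AuxLemmas

open Matrix Finset

/-- The adjacency matrix of a graph over `ℝ` is Hermitian. -/
lemma aux_adj_herm {V : Type} [Fintype V] [DecidableEq V] (G : SimpleGraph V)
    [DecidableRel G.Adj] : (G.adjMatrix ℝ).IsHermitian := by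
  rw [Matrix.IsHermitian, conjTranspose_eq_transpose_of_trivial]
  exact isSymm_adjMatrix G

/-- If every eigenvalue of the adjacency matrix is at least `-λ`, then the quadratic
form of the adjacency matrix is bounded below by `-λ‖x‖²`. -/
lemma aux_quad_bound {V : Type} [Fintype V] [DecidableEq V] (G : SimpleGraph V)
    [DecidableRel G.Adj] (lam : ℝ)
    (heig : ∀ i, -lam ≤ (aux_adj_herm G).eigenvalues i) (x : V → ℝ) :
    -(lam * (x ⬝ᵥ x)) ≤ x ⬝ᵥ (G.adjMatrix ℝ *ᵥ x) := by
  set A := G.adjMatrix ℝ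
  set B := algebraMap ℝ (Matrix V V ℝ) lam + A with hBdef
  have hB : B.IsHermitian := by
    apply Matrix.IsHermitian.add _ (aux_adj_herm G)
    rw [Algebra.algebraMap_eq_smul_one]
    show _ = _
    simp [Matrix.conjTranspose_smul]
  have hpsd : B.PosSemidef := by
    rw [hB.posSemidef_iff_eigenvalues_nonneg, Pi.le_def]; simp only [Pi.zero_apply]
    intro i
    have hmem : hB.eigenvalues i ∈ spectrum ℝ B := hB.eigenvalues_mem_spectrum_real i
    rw [← spectrum.singleton_add_eq] at hmem
    obtain ⟨a, ha, b, hb, heq⟩ := Set.mem_add.mp hmem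
    rw [Set.mem_singleton_iff] at ha
    rw [(aux_adj_herm G).spectrum_real_eq_range_eigenvalues] at hb
    obtain ⟨j, rfl⟩ := hb
    have := heig j
    rw [← heq, ha]
    linarith
  have h := hpsd.dotProduct_mulVec_nonneg x
  simp only [RCLike.re_to_real, star_trivial] at h
  have hexp : x ⬝ᵥ (B *ᵥ x) = lam * (x ⬝ᵥ x) + x ⬝ᵥ (A *ᵥ x) := by
    rw [hBdef, Matrix.add_mulVec, dotProduct_add, Algebra.algebraMap_eq_smul_one,
      Matrix.smul_mulVec, Matrix.one_mulVec, dotProduct_smul, smul_eq_mul]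
  rw [hexp] at h
  linarith

/-- Expander-mixing-type lower bound on the number of (ordered) edges inside a set. -/
lemma aux_mixing {V : Type} [Fintype V] [DecidableEq V] (G : SimpleGraph V)
    [DecidableRel G.Adj]
    {n d : ℕ} {lam : ℝ} (hn : Fintype.card V = n) (hreg : G.IsRegularOfDegree d)
    (hlam0 : 0 ≤ lam) (hn0 : 0 < n)
    (hquad : ∀ x : V → ℝ, -(lam * (x ⬝ᵥ x)) ≤ x ⬝ᵥ (G.adjMatrix ℝ *ᵥ x))
    (S : Finset V) :
    (d : ℝ) * (S.card : ℝ) ^ 2 ≤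
      (n : ℝ) * (∑ u ∈ S, ∑ v ∈ S, (if G.Adj u v then (1:ℝ) else 0)) + lam * S.card * n := by
  classical
  set s : ℝ := (S.card : ℝ) with hs
  set E : ℝ := ∑ u ∈ S, ∑ v ∈ S, (if G.Adj u v then (1:ℝ) else 0) with hE
  set g : V → ℝ := fun u => ∑ v ∈ S, (if G.Adj u v then (1:ℝ) else 0) with hgdef
  set x : V → ℝ := fun v => (if v ∈ S then (n : ℝ) else 0) - s with hx
  have hrow : ∀ u : V, (∑ v, (if G.Adj u v then (1:ℝ) else 0)) = d := by
    intro u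
    rw [Finset.sum_boole]
    norm_cast
    rw [← SimpleGraph.neighborFinset_eq_filter]
    exact hreg u
  have hcol : ∀ v : V, (∑ u, (if G.Adj u v then (1:ℝ) else 0)) = d := by
    intro v
    simp_rw [G.adj_comm]
    exact hrow v
  have hsumg : ∑ u, g u = s * d := by
    rw [hgdef]
    rw [Finset.sum_comm]
    simp_rw [hcol]
    simp [hs, mul_comm]
  have hmul : ∀ u, (G.adjMatrix ℝ *ᵥ x) u = g u * n - d * s := by
    intro u
    show (fun j => G.adjMatrix ℝ u j) ⬝ᵥ x = _
    rw [dotProduct]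
    have : ∀ v, G.adjMatrix ℝ u v * x v
        = (if v ∈ S then (if G.Adj u v then (1:ℝ) else 0) * n else 0)
          - (if G.Adj u v then (1:ℝ) else 0) * s := by
      intro v
      by_cases h1 : v ∈ S <;> by_cases h2 : G.Adj u v <;> simp [hx, h1, h2]
    simp_rw [this]
    rw [Finset.sum_sub_distrib, Finset.sum_ite_mem, Finset.univ_inter, ← Finset.sum_mul,
      ← Finset.sum_mul, hrow]
  have hform : x ⬝ᵥ (G.adjMatrix ℝ *ᵥ x) = n * (n * E) - n * (d * s * s) := by
    rw [dotProduct]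
    simp_rw [hmul]
    have : ∀ u, x u * (g u * n - d * s)
        = (if u ∈ S then (g u * n - d * s) * n else 0) - s * (g u * n - d * s) := by
      intro u
      by_cases h1 : u ∈ S <;> simp [hx, h1] <;> ring
    simp_rw [this]
    rw [Finset.sum_sub_distrib, Finset.sum_ite_mem, Finset.univ_inter]
    simp only [sub_mul]
    have h3 : ∑ u : V, s * (g u * (n:ℝ) - (d:ℝ) * s) = 0 := by
      simp_rw [mul_sub]
      rw [Finset.sum_sub_distrib, ← Finset.mul_sum, ← Finset.sum_mul, hsumg,
        Finset.sum_const, Finset.card_univ, hn, nsmul_eq_mul]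
      ring
    rw [h3, Finset.sum_sub_distrib, ← Finset.sum_mul, ← Finset.sum_mul, ← hE,
      Finset.sum_const, nsmul_eq_mul, ← hs]
    ring
  have hxx : x ⬝ᵥ x = s * ((n:ℝ) - s) ^ 2 + ((n:ℝ) - s) * s ^ 2 := by
    rw [dotProduct]
    have : ∀ u, x u * x u = (if u ∈ S then ((n:ℝ) - s)^2 else s^2) := by
      intro u
      by_cases h1 : u ∈ S <;> simp [hx, h1] <;> ring
    simp_rw [this]
    rw [Finset.sum_ite, Finset.sum_const, Finset.sum_const]
    have h1 : (Finset.univ.filter (fun u => u ∈ S)) = S := by ext u; simp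
    have h2 : (Finset.univ.filter (fun u => ¬ u ∈ S)) = Sᶜ := by ext u; simp
    rw [h1, h2, Finset.card_compl, hn]
    have hcard : S.card ≤ n := by rw [← hn]; exact Finset.card_le_univ S
    have : ((n - S.card : ℕ) : ℝ) = (n : ℝ) - s := by
      rw [Nat.cast_sub hcard, hs]
    simp only [nsmul_eq_mul, this, ← hs]
    try ring
  have h := hquad x
  rw [hform, hxx] at h
  have hsn : s ≤ (n : ℝ) := by
    rw [hs]; exact_mod_cast (hn ▸ Finset.card_le_univ S)
  have hs0 : 0 ≤ s := by positivity
  have hnn : (0:ℝ) < n := by exact_mod_cast hn0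
  have key2 : lam * s * ((n:ℝ) - s) ≤ lam * s * n := by
    nlinarith [mul_nonneg hlam0 hs0]
  have step : (n:ℝ) * ((d:ℝ) * s^2) ≤ (n:ℝ) * ((n:ℝ) * E + lam * s * n) := by
    nlinarith [mul_le_mul_of_nonneg_right key2 (le_of_lt hnn)]
  exact le_of_mul_le_mul_left step hnn

end AuxLemmas

set_option maxHeartbeats 1600000 in
/-- Claim 3.3 (finding the branch vertices): let `0 < p ≤ 1/10` and let `G` be an
`(n,d,λ)`-graph with `λ ≤ pd`. If `2 ≤ t ≤ (1−5p)d` and `X` is a vertex set with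
`|X| ≥ (1−4p)n + t²`, then `G[X]` contains `t` pairwise vertex-disjoint stars,
each with `t − 1` leaves. -/
theorem disjoint_stars_in_ndl (p : ℝ) (hp0 : 0 < p) (hp1 : p ≤ 1 / 10)
    (n d : ℕ) (lam : ℝ)
    (V : Type) [Fintype V] [DecidableEq V] (G : SimpleGraph V) [DecidableRel G.Adj]
    (hG : IsNDLGraph n d lam G) (hlam : lam ≤ p * d)
    (t : ℕ) (ht2 : 2 ≤ t) (ht : (t : ℝ) ≤ (1 - 5 * p) * (d : ℝ))
    (X : Finset V) (hX : (1 - 4 * p) * (n : ℝ) + (t : ℝ) ^ 2 ≤ (X.card : ℝ)) :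
    ∃ (c : Fin t → V) (L : Fin t → Finset V),
      (∀ i, c i ∈ X) ∧ (∀ i, L i ⊆ X) ∧ (∀ i, (L i).card = t - 1) ∧
      (∀ i, c i ∉ L i) ∧ (∀ i, ∀ v ∈ L i, G.Adj (c i) v) ∧
      (∀ i j, i ≠ j → Disjoint (insert (c i) (L i)) (insert (c j) (L j))) := by
  classical
  obtain ⟨hn, hreg, hspec⟩ := hG
  -- basic numeric facts
  have h2R : (2:ℝ) ≤ t := by exact_mod_cast ht2
  have hd0 : 0 < d := by
    rcases Nat.eq_zero_or_pos d with h | h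
    · subst h; norm_num at ht; nlinarith
    · exact h
  have hdR : (0:ℝ) < d := by exact_mod_cast hd0
  have hXn : X.card ≤ n := by rw [← hn]; exact Finset.card_le_univ X
  have hXnR : (X.card:ℝ) ≤ n := by exact_mod_cast hXn
  have hnR2 : (2:ℝ) ≤ n := by nlinarith
  have hn2 : 2 ≤ n := by exact_mod_cast hnR2
  have hn0 : 0 < n := by omega
  have hnn : (0:ℝ) < n := by exact_mod_cast hn0
  obtain ⟨i₀, hi₀, hothers⟩ := hspec (aux_adj_herm G)
  have hlam0 : 0 ≤ lam := by
    have hcard : 1 < Fintype.card V := by omega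
    obtain ⟨i, hi⟩ := Fintype.exists_ne_of_one_lt_card hcard i₀
    exact le_trans (abs_nonneg _) (hothers i hi)
  have heig : ∀ i, -lam ≤ (aux_adj_herm G).eigenvalues i := by
    intro i
    by_cases h : i = i₀
    · rw [h, hi₀]; linarith
    · have := abs_le.mp (hothers i h)
      linarith [this.1]
  have hquad := aux_quad_bound G lam heig
  have hmix := aux_mixing G hn hreg hlam0 hn0 hquad
  -- key: any sufficiently large set contains a vertex of high degree inside it
  have key : ∀ S : Finset V, (1 - 4*p)*(n:ℝ) + t ≤ S.card →
      ∃ v ∈ S, t - 1 ≤ (S.filter (fun w => G.Adj v w)).card := by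
    intro S hS
    by_contra hcon
    push_neg at hcon
    have hEbound : (∑ u ∈ S, ∑ v ∈ S, (if G.Adj u v then (1:ℝ) else 0))
        ≤ ((t:ℝ) - 2) * S.card := by
      calc (∑ u ∈ S, ∑ v ∈ S, (if G.Adj u v then (1:ℝ) else 0))
          ≤ ∑ _u ∈ S, ((t:ℝ) - 2) := by
            apply Finset.sum_le_sum
            intro u hu
            rw [Finset.sum_boole]
            have hlt := hcon u hu
            have h2 : (S.filter (fun w => G.Adj u w)).card + 2 ≤ t := by omega
            have h3 := (Nat.cast_le (α := ℝ)).mpr h2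
            push_cast at h3
            linarith
        _ = ((t:ℝ) - 2) * S.card := by rw [Finset.sum_const, nsmul_eq_mul]; ring
    have hmixS := hmix S
    set s : ℝ := (S.card : ℝ) with hs
    have hs_pos : 0 < s := by nlinarith
    have hstep : (d:ℝ) * s * s ≤ ((n:ℝ) * ((t:ℝ) - 2) + lam * n) * s := by nlinarith
    have hdiv : (d:ℝ) * s ≤ (n:ℝ) * ((t:ℝ) - 2) + lam * n :=
      le_of_mul_le_mul_right hstep hs_pos
    nlinarith [mul_le_mul_of_nonneg_left hS (le_of_lt hdR),
      mul_le_mul_of_nonneg_right hlam (le_of_lt hnn),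
      mul_le_mul_of_nonneg_right ht (le_of_lt hnn)]
  -- greedy construction of the stars
  have grow : ∀ k : ℕ, k ≤ t → ∃ (c : Fin k → V) (L : Fin k → Finset V),
      (∀ i, c i ∈ X) ∧ (∀ i, L i ⊆ X) ∧ (∀ i, (L i).card = t - 1) ∧
      (∀ i, c i ∉ L i) ∧ (∀ i, ∀ v ∈ L i, G.Adj (c i) v) ∧
      (∀ i j, i ≠ j → Disjoint (insert (c i) (L i)) (insert (c j) (L j))) := by
    intro k
    induction k with
    | zero =>
      intro _
      exact ⟨Fin.elim0, Fin.elim0, fun i => i.elim0, fun i => i.elim0, fun i => i.elim0,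
        fun i => i.elim0, fun i => i.elim0, fun i => i.elim0⟩
    | succ k ih =>
      intro hk1
      obtain ⟨c, L, hcX, hLX, hLcard, hcL, hadj, hdisj⟩ := ih (Nat.le_of_succ_le hk1)
      set R : Finset V := Finset.univ.biUnion (fun i : Fin k => insert (c i) (L i)) with hR
      have hRcard : R.card ≤ k * t := by
        refine le_trans (Finset.card_biUnion_le) ?_
        calc ∑ i : Fin k, (insert (c i) (L i)).card
            ≤ ∑ _i : Fin k, t := by
              apply Finset.sum_le_sum
              intro i _
              refine le_trans (Finset.card_insert_le _ _) ?_
              rw [hLcard i]; omega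
          _ = k * t := by rw [Finset.sum_const, Finset.card_univ, Fintype.card_fin, smul_eq_mul]
      set S : Finset V := X \ R with hSdef
      have hScard : (1 - 4*p)*(n:ℝ) + t ≤ (S.card : ℝ) := by
        have h1 : X.card ≤ S.card + R.card := by
          have h0 := Finset.le_card_sdiff R X
          rw [← hSdef] at h0
          omega
        have h1R : (X.card:ℝ) ≤ (S.card:ℝ) + (R.card:ℝ) := by exact_mod_cast h1
        have h2R' : (R.card:ℝ) ≤ (k:ℝ) * t := by exact_mod_cast hRcard
        have hkR : (k:ℝ) ≤ (t:ℝ) - 1 := by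
          have : (k:ℝ) + 1 ≤ t := by exact_mod_cast hk1
          linarith
        have htpos : (0:ℝ) ≤ t := by positivity
        nlinarith [mul_le_mul_of_nonneg_right hkR htpos]
      obtain ⟨v, hvS, hvdeg⟩ := key S hScard
      obtain ⟨L', hL'sub, hL'card⟩ := Finset.exists_subset_card_eq hvdeg
      have hvX : v ∈ X := (Finset.mem_sdiff.mp hvS).1
      have hL'S : L' ⊆ S := hL'sub.trans (Finset.filter_subset _ _)
      have hnewS : insert v L' ⊆ S := Finset.insert_subset hvS hL'S
      have hnew_old : ∀ j' : Fin k, Disjoint (insert v L') (insert (c j') (L j')) := by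
        intro j'
        have hsub2 : insert (c j') (L j') ⊆ R :=
          Finset.subset_biUnion_of_mem (fun i : Fin k => insert (c i) (L i)) (Finset.mem_univ j')
        exact (Finset.sdiff_disjoint (s := R) (t := X)).mono hnewS hsub2
      refine ⟨Fin.snoc c v, Fin.snoc L L', ?_, ?_, ?_, ?_, ?_, ?_⟩
      · refine Fin.lastCases ?_ (fun i' => ?_) <;> simp [Fin.snoc_last, Fin.snoc_castSucc]
        · exact hvX
        · exact hcX i'
      · refine Fin.lastCases ?_ (fun i' => ?_) <;> simp [Fin.snoc_last, Fin.snoc_castSucc]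
        · exact hL'S.trans (Finset.sdiff_subset)
        · exact hLX i'
      · refine Fin.lastCases ?_ (fun i' => ?_) <;> simp [Fin.snoc_last, Fin.snoc_castSucc]
        · exact hL'card
        · exact hLcard i'
      · refine Fin.lastCases ?_ (fun i' => ?_) <;> simp [Fin.snoc_last, Fin.snoc_castSucc]
        · intro hv
          exact G.irrefl (Finset.mem_filter.mp (hL'sub hv)).2
        · exact hcL i'
      · refine Fin.lastCases ?_ (fun i' => ?_) <;> simp [Fin.snoc_last, Fin.snoc_castSucc]
        · intro w hw
          exact (Finset.mem_filter.mp (hL'sub hw)).2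
        · exact hadj i'
      · intro i j
        refine Fin.lastCases ?_ (fun i' => ?_) i <;> refine Fin.lastCases ?_ (fun j' => ?_) j <;>
          intro hij <;> simp only [Fin.snoc_last, Fin.snoc_castSucc]
        · exact absurd rfl hij
        · exact hnew_old j'
        · exact (hnew_old i').symm
        · refine hdisj i' j' ?_
          simpa using hij
  exact grow t le_rfl
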